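/- arXiv:2404.11992 — 3 statements merged into one kernel-verified Lean document; each statement's English description precedes it below -/
import Mathlib

section
/- Let L₀ > 0, let p ≥ q ≥ 1 be integers, set a = p·L₀ and L = (p+q)·L₀, let α ∈ ℂ, and let Q(z) = (α+2)·∑_{m=p}^{p+q−1} z^{m} + 2·∑_{m=q}^{p−1} z^{m} + (2−α)·∑_{m=0}^{q−1} z^{m} ∈ ℂ[z]. Then for every λ ∈ ℂ, the equation sinh(Lλ) + α·sinh(aλ)·sinh((L−a)λ) = 0 holds if and only if exp(2L₀λ) = 1 or Q(exp(2L₀λ)) = 0. -/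
open Polynomial

set_option maxRecDepth 8000

lemma geom_Ico_telescope (z : ℂ) {a b : ℕ} (h : a ≤ b) :
    (z - 1) * ∑ m ∈ Finset.Ico a b, z ^ m = z ^ b - z ^ a := by
  rw [Finset.sum_Ico_eq_sum_range]
  simp_rw [pow_add]
  rw [← Finset.mul_sum]
  calc (z - 1) * (z ^ a * ∑ i ∈ Finset.range (b - a), z ^ i)
      = z ^ a * ((∑ i ∈ Finset.range (b - a), z ^ i) * (z - 1)) := by ring
    _ = z ^ a * (z ^ (b - a) - 1) := by rw [geom_sum_mul]
    _ = z ^ b - z ^ a := by rw [mul_sub, ← pow_add, Nat.add_sub_cancel' h, mul_one]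

lemma evalQ_aux (α z : ℂ) (p q : ℕ) :
    (C (α + 2) * ∑ m ∈ Finset.Ico p (p + q), X ^ m
            + C 2 * ∑ m ∈ Finset.Ico q p, X ^ m
            + C (2 - α) * ∑ m ∈ Finset.range q, X ^ m).eval z
      = (α + 2) * (∑ m ∈ Finset.Ico p (p + q), z ^ m)
        + 2 * (∑ m ∈ Finset.Ico q p, z ^ m)
        + (2 - α) * (∑ m ∈ Finset.range q, z ^ m) := by
  simp only [eval_add, eval_mul, eval_C, Polynomial.eval_finset_sum, eval_pow, eval_X]

theorem spectral_condition_polynomial_form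
    (L₀ : ℝ) (hL₀ : 0 < L₀) (p q : ℕ) (hq : 1 ≤ q) (hpq : q ≤ p)
    (a L : ℝ) (ha : a = p * L₀) (hL : L = (p + q) * L₀) (α lam : ℂ) :
    Complex.sinh ((L : ℂ) * lam)
        + α * Complex.sinh ((a : ℂ) * lam) * Complex.sinh (((L - a : ℝ) : ℂ) * lam) = 0
      ↔ Complex.exp (2 * (L₀ : ℂ) * lam) = 1
        ∨ (C (α + 2) * ∑ m ∈ Finset.Ico p (p + q), X ^ m
            + C 2 * ∑ m ∈ Finset.Ico q p, X ^ m
            + C (2 - α) * ∑ m ∈ Finset.range q, X ^ m).eval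
              (Complex.exp (2 * (L₀ : ℂ) * lam)) = 0 := by
  set E := Complex.exp ((L₀ : ℂ) * lam) with hE
  have hEne : E ≠ 0 := Complex.exp_ne_zero _
  have hz : Complex.exp (2 * (L₀ : ℂ) * lam) = E ^ 2 := by
    rw [hE, ← Complex.exp_nat_mul]
    norm_num
    ring_nf
  clear_value E
  -- sinh expressions
  have h1 : Complex.sinh ((L : ℂ) * lam) = (E ^ (p + q) - (E ^ (p + q))⁻¹) / 2 := by
    have hl : (L : ℂ) * lam = ((p + q : ℕ) : ℂ) * ((L₀ : ℂ) * lam) := by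
      rw [hL]; push_cast; ring
    rw [hl, eq_div_iff (two_ne_zero : (2:ℂ) ≠ 0), mul_comm, Complex.two_sinh,
      Complex.exp_neg, Complex.exp_nat_mul, ← hE]
  have h2 : Complex.sinh ((a : ℂ) * lam) = (E ^ p - (E ^ p)⁻¹) / 2 := by
    have hl : (a : ℂ) * lam = ((p : ℕ) : ℂ) * ((L₀ : ℂ) * lam) := by
      rw [ha]; push_cast; ring
    rw [hl, eq_div_iff (two_ne_zero : (2:ℂ) ≠ 0), mul_comm, Complex.two_sinh,
      Complex.exp_neg, Complex.exp_nat_mul, ← hE]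
  have h3 : Complex.sinh (((L - a : ℝ) : ℂ) * lam) = (E ^ q - (E ^ q)⁻¹) / 2 := by
    have hl : ((L - a : ℝ) : ℂ) * lam = ((q : ℕ) : ℂ) * ((L₀ : ℂ) * lam) := by
      rw [hL, ha]; push_cast; ring
    rw [hl, eq_div_iff (two_ne_zero : (2:ℂ) ≠ 0), mul_comm, Complex.two_sinh,
      Complex.exp_neg, Complex.exp_nat_mul, ← hE]
  -- evaluate the polynomial
  have hQ : (C (α + 2) * ∑ m ∈ Finset.Ico p (p + q), X ^ m
            + C 2 * ∑ m ∈ Finset.Ico q p, X ^ m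
            + C (2 - α) * ∑ m ∈ Finset.range q, X ^ m).eval (E ^ 2)
      = (α + 2) * (∑ m ∈ Finset.Ico p (p + q), (E ^ 2) ^ m)
        + 2 * (∑ m ∈ Finset.Ico q p, (E ^ 2) ^ m)
        + (2 - α) * (∑ m ∈ Finset.range q, (E ^ 2) ^ m) := by
    exact evalQ_aux α (E^2) p q
  -- telescoping identities
  have t1 := geom_Ico_telescope (E ^ 2) (Nat.le_add_right p q)
  have t2 := geom_Ico_telescope (E ^ 2) hpq
  have t3 : (E ^ 2 - 1) * ∑ m ∈ Finset.range q, (E ^ 2) ^ m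
      = (E ^ 2) ^ q - 1 := by
    have h := geom_Ico_telescope (E ^ 2) (Nat.zero_le q)
    rw [← Finset.range_eq_Ico] at h
    rw [h, pow_zero]
  have hfac : (E ^ 2 - 1) *
      ((α + 2) * (∑ m ∈ Finset.Ico p (p + q), (E ^ 2) ^ m)
        + 2 * (∑ m ∈ Finset.Ico q p, (E ^ 2) ^ m)
        + (2 - α) * (∑ m ∈ Finset.range q, (E ^ 2) ^ m))
      = 2 * ((E ^ 2) ^ (p + q) - 1)
        + α * ((E ^ 2) ^ p - 1) * ((E ^ 2) ^ q - 1) := by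
    linear_combination (α + 2) * t1 + 2 * t2 + (2 - α) * t3
  -- main identity
  have hup : E ^ p ≠ 0 := pow_ne_zero _ hEne
  have huq : E ^ q ≠ 0 := pow_ne_zero _ hEne
  have epq : E ^ (p + q) = E ^ p * E ^ q := pow_add E p q
  have e1 : (E ^ 2) ^ (p + q) = (E ^ p * E ^ q) ^ 2 := by
    rw [← epq, ← pow_mul, ← pow_mul, Nat.mul_comm]
  have e2 : (E ^ 2) ^ p = (E ^ p) ^ 2 := by rw [← pow_mul, ← pow_mul, Nat.mul_comm]
  have e3 : (E ^ 2) ^ q = (E ^ q) ^ 2 := by rw [← pow_mul, ← pow_mul, Nat.mul_comm]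
  have hsinh : (Complex.sinh ((L : ℂ) * lam)
        + α * Complex.sinh ((a : ℂ) * lam) * Complex.sinh (((L - a : ℝ) : ℂ) * lam))
        * (4 * E ^ (p + q))
      = 2 * ((E ^ 2) ^ (p + q) - 1)
        + α * ((E ^ 2) ^ p - 1) * ((E ^ 2) ^ q - 1) := by
    rw [h1, h2, h3, epq, e1, e2, e3]
    field_simp
    ring
  have hmul : (Complex.sinh ((L : ℂ) * lam)
        + α * Complex.sinh ((a : ℂ) * lam) * Complex.sinh (((L - a : ℝ) : ℂ) * lam))
        * (4 * E ^ (p + q))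
      = (E ^ 2 - 1) *
        ((C (α + 2) * ∑ m ∈ Finset.Ico p (p + q), X ^ m
            + C 2 * ∑ m ∈ Finset.Ico q p, X ^ m
            + C (2 - α) * ∑ m ∈ Finset.range q, X ^ m).eval (E ^ 2)) := by
    rw [hQ, hfac, hsinh]
  rw [hz]
  constructor
  · intro h
    have h0 : (E ^ 2 - 1) *
        ((C (α + 2) * ∑ m ∈ Finset.Ico p (p + q), X ^ m
            + C 2 * ∑ m ∈ Finset.Ico q p, X ^ m
            + C (2 - α) * ∑ m ∈ Finset.range q, X ^ m).eval (E ^ 2)) = 0 := by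
      rw [← hmul, h, zero_mul]
    rcases mul_eq_zero.mp h0 with h' | h'
    · exact Or.inl (sub_eq_zero.mp h')
    · exact Or.inr h'
  · intro h
    have h0 : (E ^ 2 - 1) *
        ((C (α + 2) * ∑ m ∈ Finset.Ico p (p + q), X ^ m
            + C 2 * ∑ m ∈ Finset.Ico q p, X ^ m
            + C (2 - α) * ∑ m ∈ Finset.range q, X ^ m).eval (E ^ 2)) = 0 := by
      rcases h with h | h
      · rw [sub_eq_zero.mpr h, zero_mul]
      · rw [h, mul_zero]
    have h1' := hmul.trans h0
    rcases mul_eq_zero.mp h1' with h' | h'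
    · exact h'
    · exact absurd h' (mul_ne_zero (by norm_num : (4:ℂ) ≠ 0) (pow_ne_zero _ hEne))
end

section
/- Let n ≥ 1 be an integer, let β_0, β_1, …, β_n be real numbers with 0 = β_0 < β_1 < … < β_n, and let r_0, r_1, …, r_n be nonzero complex numbers. Define g(λ) = ∑_{j=0}^{n} r_j·exp(β_j·λ) for λ ∈ ℂ. Then there exists c₁ > 0 such that every λ ∈ ℂ with g(λ) = 0 satisfies |Re λ| < c₁. -/
/-!
If `Re λ` is large, the term with the largest exponent dominates all the others in modulus,
and if `Re λ` is very negative, the term with the smallest exponent does; in either case the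
sum cannot vanish. The second case is the first one applied to `-β` and `-λ`.
-/

open Filter Finset Topology

theorem sum_ne_zero_of_sum_norm_erase_lt {ι E : Type*} [DecidableEq ι] [NormedAddCommGroup E]
    {s : Finset ι} {f : ι → E} {i : ι} (hi : i ∈ s) (h : ∑ j ∈ s.erase i, ‖f j‖ < ‖f i‖) :
    ∑ j ∈ s, f j ≠ 0 := by
  rw [← add_sum_erase s f hi]
  intro hzero
  have : ‖f i‖ ≤ ∑ j ∈ s.erase i, ‖f j‖ := by
    rw [eq_neg_of_add_eq_zero_left hzero, norm_neg]
    exact norm_sum_le _ _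
  exact this.not_gt h

theorem Complex.norm_mul_exp_ofReal_mul (c : ℂ) (b : ℝ) (z : ℂ) :
    ‖c * Complex.exp (b * z)‖ = ‖c‖ * Real.exp (b * z.re) := by
  rw [norm_mul, Complex.norm_exp, Complex.re_ofReal_mul]

section ExpSum

variable {ι : Type*} [Fintype ι] (β : ι → ℝ) (r : ι → ℂ) {i : ι}

theorem exists_forall_re_ge_sum_mul_exp_ne_zero (hr : r i ≠ 0) (hβ : ∀ j ≠ i, β j < β i) :
    ∃ a, ∀ z : ℂ, a ≤ z.re → ∑ j, r j * Complex.exp (β j * z) ≠ 0 := by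
  classical
  have htendsto : Tendsto (fun x => ∑ j ∈ univ.erase i, ‖r j‖ * Real.exp ((β j - β i) * x))
      atTop (𝓝 0) := by
    rw [show (0 : ℝ) = ∑ j ∈ univ.erase i, ‖r j‖ * 0 by simp]
    refine tendsto_finsetSum _ fun j hj => (Real.tendsto_exp_atBot.comp ?_).const_mul _
    exact tendsto_id.const_mul_atTop_of_neg (sub_neg.2 (hβ j (ne_of_mem_erase hj)))
  obtain ⟨a, ha⟩ := eventually_atTop.1 (htendsto.eventually (gt_mem_nhds (norm_pos_iff.2 hr)))
  refine ⟨a, fun z hz => sum_ne_zero_of_sum_norm_erase_lt (mem_univ i) ?_⟩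
  simp only [Complex.norm_mul_exp_ofReal_mul]
  calc ∑ j ∈ univ.erase i, ‖r j‖ * Real.exp (β j * z.re)
      = Real.exp (β i * z.re) * ∑ j ∈ univ.erase i, ‖r j‖ * Real.exp ((β j - β i) * z.re) := by
        rw [mul_sum]
        refine sum_congr rfl fun j _ => ?_
        rw [sub_mul, Real.exp_sub]
        field_simp
    _ < Real.exp (β i * z.re) * ‖r i‖ := mul_lt_mul_of_pos_left (ha _ hz) (Real.exp_pos _)
    _ = ‖r i‖ * Real.exp (β i * z.re) := mul_comm _ _

theorem exists_forall_re_le_sum_mul_exp_ne_zero (hr : r i ≠ 0) (hβ : ∀ j ≠ i, β i < β j) :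
    ∃ b, ∀ z : ℂ, z.re ≤ b → ∑ j, r j * Complex.exp (β j * z) ≠ 0 := by
  obtain ⟨a, ha⟩ :=
    exists_forall_re_ge_sum_mul_exp_ne_zero (-β) r hr fun j hj => neg_lt_neg (hβ j hj)
  refine ⟨-a, fun z hz => ?_⟩
  simpa using ha (-z) (by simpa [le_neg] using hz)

end ExpSum

theorem exponential_polynomial_zeros_in_strip_general
    (n : ℕ) (β : Fin (n + 1) → ℝ) (hβ : StrictMono β)
    (r : Fin (n + 1) → ℂ) (hr : ∀ j, r j ≠ 0) :
    ∃ c₁ > 0, ∀ lam : ℂ,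
      (∑ j, r j * Complex.exp ((β j : ℂ) * lam)) = 0 → |lam.re| < c₁ := by
  obtain ⟨a, ha⟩ := exists_forall_re_ge_sum_mul_exp_ne_zero β r (hr (Fin.last n))
    fun j hj => hβ (Fin.lt_last_iff_ne_last.2 hj)
  obtain ⟨b, hb⟩ := exists_forall_re_le_sum_mul_exp_ne_zero β r (hr 0)
    fun j hj => hβ (Fin.pos_iff_ne_zero.2 hj)
  refine ⟨max |a| |b| + 1, by positivity, fun z hz => ?_⟩
  have hlt : z.re < a := lt_of_not_ge fun h => ha z h hz
  have hgt : b < z.re := lt_of_not_ge fun h => hb z h hz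
  rw [abs_lt]
  constructor <;> linarith [le_abs_self a, neg_abs_le b, le_max_left |a| |b|, le_max_right |a| |b|]

theorem exponential_polynomial_zeros_in_strip
    (n : ℕ) (hn : 1 ≤ n) (β : Fin (n + 1) → ℝ) (hβ0 : β 0 = 0) (hβ : StrictMono β)
    (r : Fin (n + 1) → ℂ) (hr : ∀ j, r j ≠ 0) :
    ∃ c₁ > 0, ∀ lam : ℂ,
      (∑ j, r j * Complex.exp ((β j : ℂ) * lam)) = 0 → |lam.re| < c₁ :=
  exponential_polynomial_zeros_in_strip_general n β hβ r hr
end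

section
/- Let L > 0 and let α = 2 or α = −2. Then the set of all λ ∈ ℂ satisfying sinh(Lλ) + α·sinh(Lλ/2)² = 0 is exactly {2πi·j/L : j ∈ ℤ}. -/
open Complex

lemma sinh_eq_zero_iff_aux (y : ℂ) : Complex.sinh y = 0 ↔ ∃ k : ℤ, y = k * Real.pi * Complex.I := by
  constructor
  · intro h
    have hs : Complex.sin (y * Complex.I) = 0 := by
      rw [Complex.sin_mul_I, h, zero_mul]
    rw [Complex.sin_eq_zero_iff] at hs
    obtain ⟨k, hk⟩ := hs
    refine ⟨-k, ?_⟩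
    have hy : y = (k : ℂ) * Real.pi * (-Complex.I) := by
      calc y = y * Complex.I * (-Complex.I) := by
              rw [mul_assoc]; simp [Complex.I_mul_I]
        _ = (k : ℂ) * Real.pi * (-Complex.I) := by rw [hk]
    rw [hy]; push_cast; ring
  · rintro ⟨k, rfl⟩
    have : ((k : ℂ) * Real.pi * Complex.I) * Complex.I = (-k : ℤ) * Real.pi := by
      push_cast; rw [mul_assoc, Complex.I_mul_I]; ring
    have hs : Complex.sin (((k : ℂ) * Real.pi * Complex.I) * Complex.I) = 0 := by
      rw [this, Complex.sin_int_mul_pi]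
    rw [Complex.sin_mul_I] at hs
    simpa using hs

theorem midpoint_critical_damping_spectrum
    (L : ℝ) (hL : 0 < L) (α : ℂ) (hα : α = 2 ∨ α = -2) :
    {lam : ℂ | Complex.sinh ((L : ℂ) * lam)
        + α * Complex.sinh ((L : ℂ) * lam / 2) ^ 2 = 0}
      = {lam : ℂ | ∃ j : ℤ, lam = 2 * Real.pi * Complex.I * j / L} := by
  have hL0 : (L : ℂ) ≠ 0 := by exact_mod_cast ne_of_gt hL
  ext lam
  simp only [Set.mem_setOf_eq]
  set y : ℂ := (L : ℂ) * lam / 2 with hy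
  have h2y : (L : ℂ) * lam = 2 * y := by rw [hy]; ring
  have hfac : Complex.sinh ((L : ℂ) * lam) + α * Complex.sinh ((L : ℂ) * lam / 2) ^ 2
      = Complex.sinh y * (2 * Complex.cosh y + α * Complex.sinh y) := by
    rw [h2y, Complex.sinh_two_mul]; ring
  have hne : 2 * Complex.cosh y + α * Complex.sinh y ≠ 0 := by
    rcases hα with rfl | rfl
    · have : 2 * Complex.cosh y + 2 * Complex.sinh y = 2 * Complex.exp y := by
        rw [← Complex.cosh_add_sinh]; ring
      rw [this]
      exact mul_ne_zero two_ne_zero (Complex.exp_ne_zero y)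
    · have : 2 * Complex.cosh y + (-2) * Complex.sinh y = 2 * Complex.exp (-y) := by
        rw [← Complex.cosh_sub_sinh]; ring
      rw [this]
      exact mul_ne_zero two_ne_zero (Complex.exp_ne_zero _)
  rw [hfac, mul_eq_zero]
  constructor
  · rintro (h | h)
    · rw [sinh_eq_zero_iff_aux] at h
      obtain ⟨k, hk⟩ := h
      refine ⟨k, ?_⟩
      have : (L : ℂ) * lam = 2 * ((k : ℂ) * Real.pi * Complex.I) := by
        rw [← hk, hy]; ring
      field_simp
      linear_combination this
    · exact absurd h hne
  · rintro ⟨j, rfl⟩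
    left
    rw [sinh_eq_zero_iff_aux]
    refine ⟨j, ?_⟩
    rw [hy]
    field_simp
end
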